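/- Let (a,b) be a fictitious-play trajectory. Then for every horizon T ≥ 5: |(1/T)·Σ_{t=1}^T u_A^t − 1/2| ≤ 2√10/√T and |(1/T)·Σ_{t=1}^T u_B^t − 1/2| ≤ √10/√T. -/

import Mathlib

open MeasureTheory

/-- Bob's choice of the left or right piece. -/
inductive Choice
  | L
  | R
deriving DecidableEq

/-- The cumulative valuation `V(x) = ∫_0^x v`. -/
noncomputable def cumul (v : ℝ → ℝ) (x : ℝ) : ℝ := ∫ y in (0:ℝ)..x, v y

/-- `v` is an integrable value density on `[0,1]`, bounded between `lo` and `hi`,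
integrating to `1`. -/
def IsDensity (lo hi : ℝ) (v : ℝ → ℝ) : Prop :=
  IntervalIntegrable v volume 0 1 ∧
  (∀ x ∈ Set.Icc (0:ℝ) 1, lo ≤ v x ∧ v x ≤ hi) ∧
  (∫ y in (0:ℝ)..1, v y) = 1

/-- Alice's round-`t` utility: if Bob picks `L` she gets `[a_t,1]`, else `[0,a_t]`. -/
noncomputable def uA (vA : ℝ → ℝ) (a : ℕ → ℝ) (b : ℕ → Choice) (t : ℕ) : ℝ :=
  if b t = Choice.L then 1 - cumul vA (a t) else cumul vA (a t)

/-- Bob's round-`t` utility: if he picks `L` he gets `[0,a_t]`, else `[a_t,1]`. -/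
noncomputable def uB (vB : ℝ → ℝ) (a : ℕ → ℝ) (b : ℕ → Choice) (t : ℕ) : ℝ :=
  if b t = Choice.L then cumul vB (a t) else 1 - cumul vB (a t)

/-- `α_t = r_t − ℓ_t`: number of `R` choices minus number of `L` choices up to round `t`. -/
noncomputable def alphaFP (b : ℕ → Choice) (t : ℕ) : ℝ :=
  ∑ i ∈ Finset.Icc 1 t, (if b i = Choice.R then (1:ℝ) else -1)

/-- `β_t = Σ_{i=1}^t (2 V_B(a_i) − 1)`. -/
noncomputable def betaFP (vB : ℝ → ℝ) (a : ℕ → ℝ) (t : ℕ) : ℝ :=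
  ∑ i ∈ Finset.Icc 1 t, (2 * cumul vB (a i) - 1)

/-- The radius `ρ_t = |α_t| + |β_t|`. -/
noncomputable def rhoFP (vB : ℝ → ℝ) (a : ℕ → ℝ) (b : ℕ → Choice) (t : ℕ) : ℝ :=
  |alphaFP b t| + |betaFP vB a t|

/-- `(a,b)` is a fictitious-play trajectory. -/
def IsFictitiousPlay (vB : ℝ → ℝ) (a : ℕ → ℝ) (b : ℕ → Choice) : Prop :=
  ∀ t : ℕ,
    (0 < alphaFP b t → a (t+1) = 1) ∧
    (alphaFP b t < 0 → a (t+1) = 0) ∧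
    (0 < betaFP vB a t → b (t+1) = Choice.L) ∧
    (betaFP vB a t < 0 → b (t+1) = Choice.R)

/-- Round `t` is axis-crossing. -/
def AxisCrossing (vB : ℝ → ℝ) (a : ℕ → ℝ) (b : ℕ → Choice) (t : ℕ) : Prop :=
  alphaFP b t = 0 ∨
  (betaFP vB a t ≤ 0 ∧ 0 < betaFP vB a (t+1)) ∨
  (0 ≤ betaFP vB a t ∧ betaFP vB a (t+1) < 0)


open Finset

/-! Writing `s_t = ±1` for Bob's choice (`+1` for `R`), `c_t = 2 V_B(a_t) - 1` and
`d_t = 2 V_A(a_t) - 1`, the payoffs are `u_B^t = (1 - s_t c_t) / 2` and `u_A^t = (1 + s_t d_t) / 2`,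
so both claims are bounds on `∑ s_t c_t` and `∑ s_t d_t`.

Fictitious play makes the point `(α_t, β_t)` rotate around the origin. Step by step
`s c ≤ Δ|α|` and `-s c ≤ Δ|β|`, which telescopes to `|∑ s c| ≤ ρ_T`. For `∑ s d` the same works,
except at steps with `α_t = 0`; these are paid for by a version of `ρ` in which `|β|` is rounded
to an integer, giving `|∑ s d| ≤ 2 ρ_T + 2`.

Finally `ρ` is constant between two axis crossings and grows by at most `2` at a crossing, while
after a crossing at radius `ρ` the next one is at least `ρ - 2` steps away; hence `ρ_T² ≤ 16 T`. -/

lemma sum_Icc_one_le_sub {f g : ℕ → ℝ} (h : ∀ t, g (t + 1) ≤ f (t + 1) - f t) (T : ℕ) :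
    ∑ t ∈ Icc 1 T, g t ≤ f T - f 0 := by
  induction T with
  | zero => simp
  | succ T ih => rw [sum_Icc_succ_top (by omega)]; linarith [h T]

/-- Rounding `|b|` up while `β` moves towards `0` (that is, `a b < 0`) and down otherwise makes
this potential nondecreasing along a trajectory, and makes it grow by at least `1` at every step
where Alice's payoff can fall below the benchmark (see `abs_α_succ_sub_sub_le`). -/
noncomputable def roundedRadius (a b : ℝ) : ℝ :=
  |a| + if a * b < 0 then (⌈|b|⌉ : ℝ) else ⌊|b|⌋

lemma roundedRadius_neg_neg (a b : ℝ) : roundedRadius (-a) (-b) = roundedRadius a b := by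
  simp [roundedRadius]

lemma roundedRadius_of_neg {a b : ℝ} (h : a * b < 0) : roundedRadius a b = |a| + ⌈|b|⌉ := by
  simp [roundedRadius, h]

lemma roundedRadius_of_nonneg {a b : ℝ} (h : 0 ≤ a * b) : roundedRadius a b = |a| + ⌊|b|⌋ := by
  simp [roundedRadius, not_lt.2 h]

lemma add_floor_le_roundedRadius (a b : ℝ) : |a| + ⌊|b|⌋ ≤ roundedRadius a b := by
  unfold roundedRadius
  split_ifs
  · exact add_le_add_right (by exact_mod_cast Int.floor_le_ceil _) _
  · rfl

lemma roundedRadius_le (a b : ℝ) : roundedRadius a b ≤ |a| + |b| + 1 := by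
  unfold roundedRadius
  split_ifs
  · linarith [Int.ceil_lt_add_one |b|]
  · linarith [Int.floor_le |b|]

/-- Only these properties of a fictitious-play trajectory are used (`s`, `c`, `d` as in the
header). Unlike the concrete trajectories, they are preserved by negating all five sequences,
which halves every case analysis. -/
structure FPTrajectory where
  α : ℕ → ℝ
  β : ℕ → ℝ
  s : ℕ → ℝ
  c : ℕ → ℝ
  d : ℕ → ℝ
  α_zero : α 0 = 0
  β_zero : β 0 = 0
  α_succ : ∀ t, α (t + 1) = α t + s (t + 1)
  β_succ : ∀ t, β (t + 1) = β t + c (t + 1)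
  s_eq : ∀ t, s (t + 1) = 1 ∨ s (t + 1) = -1
  abs_c_le : ∀ t, |c (t + 1)| ≤ 1
  abs_d_le : ∀ t, |d (t + 1)| ≤ 1
  c_of_α_pos : ∀ t, 0 < α t → c (t + 1) = 1
  c_of_α_neg : ∀ t, α t < 0 → c (t + 1) = -1
  s_of_β_pos : ∀ t, 0 < β t → s (t + 1) = -1
  s_of_β_neg : ∀ t, β t < 0 → s (t + 1) = 1
  d_eq_c : ∀ t, |c (t + 1)| = 1 → d (t + 1) = c (t + 1)

namespace FPTrajectory

variable (C : FPTrajectory)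

@[simps]
def neg : FPTrajectory where
  α t := -C.α t
  β t := -C.β t
  s t := -C.s t
  c t := -C.c t
  d t := -C.d t
  α_zero := by simp [C.α_zero]
  β_zero := by simp [C.β_zero]
  α_succ t := by rw [C.α_succ]; ring
  β_succ t := by rw [C.β_succ]; ring
  s_eq t := by rcases C.s_eq t with h | h <;> simp [h]
  abs_c_le t := by simpa using C.abs_c_le t
  abs_d_le t := by simpa using C.abs_d_le t
  c_of_α_pos t h := by rw [C.c_of_α_neg t (neg_pos.1 h)]; norm_num
  c_of_α_neg t h := by rw [C.c_of_α_pos t (neg_lt_zero.1 h)]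
  s_of_β_pos t h := by rw [C.s_of_β_neg t (neg_pos.1 h)]
  s_of_β_neg t h := by rw [C.s_of_β_pos t (neg_lt_zero.1 h)]; norm_num
  d_eq_c t h := by rw [C.d_eq_c t (by simpa using h)]

def ρ (t : ℕ) : ℝ := |C.α t| + |C.β t|

noncomputable def roundedρ (t : ℕ) : ℝ := roundedRadius (C.α t) (C.β t)

def Crossing (t : ℕ) : Prop :=
  C.α t = 0 ∨ (C.β t ≤ 0 ∧ 0 < C.β (t + 1)) ∨ (0 ≤ C.β t ∧ C.β (t + 1) < 0)

@[simp] lemma neg_ρ (t : ℕ) : C.neg.ρ t = C.ρ t := by simp [ρ]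

@[simp] lemma neg_roundedρ (t : ℕ) : C.neg.roundedρ t = C.roundedρ t := by
  simp [roundedρ, roundedRadius_neg_neg]

@[simp] lemma neg_crossing_iff {t : ℕ} : C.neg.Crossing t ↔ C.Crossing t := by
  simp only [Crossing, neg_α, neg_β, neg_eq_zero, neg_nonpos, neg_pos, neg_nonneg, neg_lt_zero]
  tauto

lemma ρ_nonneg (t : ℕ) : 0 ≤ C.ρ t := by unfold ρ; positivity

lemma crossing_zero : C.Crossing 0 := Or.inl C.α_zero

lemma exists_int_eq_α (t : ℕ) : ∃ n : ℤ, C.α t = n := by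
  induction t with
  | zero => exact ⟨0, by simp [C.α_zero]⟩
  | succ t ih =>
    obtain ⟨n, hn⟩ := ih
    rcases C.s_eq t with h | h
    · exact ⟨n + 1, by rw [C.α_succ, hn, h]; push_cast; ring⟩
    · exact ⟨n - 1, by rw [C.α_succ, hn, h]; push_cast; ring⟩

lemma one_le_α {t : ℕ} (h : 0 < C.α t) : 1 ≤ C.α t := by
  obtain ⟨n, hn⟩ := C.exists_int_eq_α t
  rw [hn] at h ⊢
  exact_mod_cast (Int.cast_pos.1 h : 0 < n)

lemma abs_s (t : ℕ) : |C.s (t + 1)| = 1 := by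
  rcases C.s_eq t with h | h <;> simp [h]

lemma neg_one_le_s (t : ℕ) : -1 ≤ C.s (t + 1) := by
  rcases C.s_eq t with h | h <;> simp [h]

lemma d_of_α_pos {t : ℕ} (h : 0 < C.α t) : C.d (t + 1) = 1 := by
  rw [C.d_eq_c t (by simp [C.c_of_α_pos t h]), C.c_of_α_pos t h]

lemma d_of_α_neg {t : ℕ} (h : C.α t < 0) : C.d (t + 1) = -1 := by
  rw [C.d_eq_c t (by simp [C.c_of_α_neg t h]), C.c_of_α_neg t h]

lemma abs_α_succ_sub_of_pos {t : ℕ} (h : 0 < C.α t) :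
    |C.α (t + 1)| - |C.α t| = C.s (t + 1) := by
  have := C.one_le_α h
  have := C.neg_one_le_s t
  rw [C.α_succ, abs_of_pos h, abs_of_nonneg (by linarith)]
  ring

lemma abs_α_succ_sub_of_neg {t : ℕ} (h : C.α t < 0) :
    |C.α (t + 1)| - |C.α t| = -C.s (t + 1) := by
  simpa using C.neg.abs_α_succ_sub_of_pos (t := t) (by simpa using h)

lemma abs_α_succ_sub_of_eq_zero {t : ℕ} (h : C.α t = 0) : |C.α (t + 1)| - |C.α t| = 1 := by
  rw [C.α_succ, h, zero_add, abs_zero, sub_zero, C.abs_s]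

lemma s_mul_le_abs_α_succ_sub {t : ℕ} {e : ℝ} (he : |e| ≤ 1) (hpos : 0 < C.α t → e = 1)
    (hneg : C.α t < 0 → e = -1) : C.s (t + 1) * e ≤ |C.α (t + 1)| - |C.α t| := by
  rcases lt_trichotomy (C.α t) 0 with h | h | h
  · rw [C.abs_α_succ_sub_of_neg h, hneg h, mul_neg_one]
  · rw [C.abs_α_succ_sub_of_eq_zero h]
    calc C.s (t + 1) * e ≤ |C.s (t + 1) * e| := le_abs_self _
      _ ≤ 1 := by rwa [abs_mul, C.abs_s, one_mul]
  · rw [C.abs_α_succ_sub_of_pos h, hpos h, mul_one]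

lemma neg_s_mul_c_le_abs_β_succ_sub (t : ℕ) :
    -(C.s (t + 1) * C.c (t + 1)) ≤ |C.β (t + 1)| - |C.β t| := by
  rw [C.β_succ]
  rcases lt_trichotomy (C.β t) 0 with h | h | h
  · rw [C.s_of_β_neg t h, abs_of_neg h]
    linarith [neg_le_abs (C.β t + C.c (t + 1))]
  · rw [h, zero_add, abs_zero, sub_zero]
    calc -(C.s (t + 1) * C.c (t + 1)) ≤ |C.s (t + 1) * C.c (t + 1)| := neg_le_abs _
      _ = |C.c (t + 1)| := by rw [abs_mul, C.abs_s, one_mul]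
  · rw [C.s_of_β_pos t h, abs_of_pos h]
    linarith [le_abs_self (C.β t + C.c (t + 1))]

lemma abs_sum_s_mul_c_le (T : ℕ) : |∑ t ∈ Icc 1 T, C.s t * C.c t| ≤ C.ρ T := by
  have hα := sum_Icc_one_le_sub (g := fun t ↦ C.s t * C.c t) (f := fun t ↦ |C.α t|)
    (fun t ↦ C.s_mul_le_abs_α_succ_sub (C.abs_c_le t) (C.c_of_α_pos t) (C.c_of_α_neg t)) T
  have hβ := sum_Icc_one_le_sub (g := fun t ↦ -(C.s t * C.c t)) (f := fun t ↦ |C.β t|)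
    C.neg_s_mul_c_le_abs_β_succ_sub T
  simp only [sum_neg_distrib, C.α_zero, C.β_zero, abs_zero, sub_zero] at hα hβ
  rw [abs_le, ρ]
  constructor <;> linarith [abs_nonneg (C.α T), abs_nonneg (C.β T)]

lemma roundedρ_le_succ_of_α_pos {t : ℕ} (hβ : 0 ≤ C.β t) (hα : 0 < C.α t) :
    C.roundedρ t ≤ C.roundedρ (t + 1) := by
  have := C.one_le_α hα
  have := C.neg_one_le_s t
  have hα' : 0 ≤ C.α (t + 1) := by rw [C.α_succ]; linarith
  have hβ' : C.β (t + 1) = C.β t + 1 := by rw [C.β_succ, C.c_of_α_pos t hα]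
  rw [roundedρ, roundedρ, roundedRadius_of_nonneg (mul_nonneg hα.le hβ),
    roundedRadius_of_nonneg (mul_nonneg hα' (by linarith)), hβ', abs_of_nonneg hβ,
    abs_of_nonneg (by linarith : 0 ≤ C.β t + 1), Int.floor_add_one, abs_of_pos hα,
    abs_of_nonneg hα', C.α_succ]
  push_cast
  linarith

lemma roundedρ_le_succ_of_α_neg {t : ℕ} (hβ : 0 ≤ C.β t) (hα : C.α t < 0) :
    C.roundedρ t ≤ C.roundedρ (t + 1) := by
  have hβ' : C.β (t + 1) = C.β t - 1 := by rw [C.β_succ, C.c_of_α_neg t hα]; ring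
  have hfloor : |C.α (t + 1)| + ⌊|C.β t - 1|⌋ ≤ C.roundedρ (t + 1) := by
    rw [roundedρ, ← hβ']; exact add_floor_le_roundedRadius _ _
  have : (0 : ℝ) ≤ ⌊|C.β t - 1|⌋ := by exact_mod_cast Int.floor_nonneg.2 (abs_nonneg _)
  rcases hβ.eq_or_lt with h0 | hpos
  · have : |C.α t| - 1 ≤ |C.α (t + 1)| := by
      rw [C.α_succ, ← C.abs_s t]; exact abs_sub_abs_le_abs_add _ _
    rw [← h0, zero_sub, abs_neg, abs_one, Int.floor_one, Int.cast_one] at hfloor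
    rw [roundedρ, roundedRadius_of_nonneg (by rw [← h0, mul_zero]), ← h0, abs_zero,
      Int.floor_zero, Int.cast_zero, add_zero]
    linarith
  have hs := C.s_of_β_pos t hpos
  have hα' : |C.α (t + 1)| = |C.α t| + 1 := by
    rw [C.α_succ, hs, abs_of_neg hα, abs_of_neg (by linarith)]; ring
  rw [roundedρ, roundedRadius_of_neg (mul_neg_of_neg_of_pos hα hpos), abs_of_pos hpos]
  rcases lt_or_ge 1 (C.β t) with h1 | h1
  · have hneg : C.α (t + 1) * C.β (t + 1) < 0 :=
      mul_neg_of_neg_of_pos (by rw [C.α_succ, hs]; linarith) (by linarith)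
    rw [roundedρ, roundedRadius_of_neg hneg, hα', hβ', abs_of_pos (by linarith : 0 < C.β t - 1),
      Int.ceil_sub_one]
    push_cast
    linarith
  · have : ⌈C.β t⌉ = 1 := Int.ceil_eq_iff.2 ⟨by norm_num; linarith, by norm_num; linarith⟩
    rw [this, Int.cast_one, ← hα']
    linarith

lemma one_add_ceil_le_roundedρ_succ {t : ℕ} (hβ : 0 < C.β t) (hα : C.α t = 0) :
    1 + ⌈C.β t + C.c (t + 1)⌉ ≤ C.roundedρ (t + 1) := by
  have hα' : C.α (t + 1) = -1 := by rw [C.α_succ, hα, C.s_of_β_pos t hβ, zero_add]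
  rw [roundedρ, hα', C.β_succ]
  rcases lt_or_ge 0 (C.β t + C.c (t + 1)) with h | h
  · rw [roundedRadius_of_neg (by linarith), abs_of_pos h]
    norm_num
  · have := add_floor_le_roundedRadius (-1) (C.β t + C.c (t + 1))
    have : (0 : ℝ) ≤ ⌊|C.β t + C.c (t + 1)|⌋ := by
      exact_mod_cast Int.floor_nonneg.2 (abs_nonneg _)
    have : (⌈C.β t + C.c (t + 1)⌉ : ℝ) ≤ 0 := by exact_mod_cast Int.ceil_nonpos.2 h
    rw [abs_neg, abs_one] at *
    linarith

lemma one_sub_s_mul_d_le_of_α_eq_zero {t : ℕ} (hβ : 0 ≤ C.β t) (hα : C.α t = 0) :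
    1 - C.s (t + 1) * C.d (t + 1) ≤ 2 * (C.roundedρ (t + 1) - C.roundedρ t) := by
  have hd := abs_le.1 (C.abs_d_le t)
  have hc := abs_le.1 (C.abs_c_le t)
  have hρt : C.roundedρ t = ⌊C.β t⌋ := by
    simp [roundedρ, roundedRadius, hα, abs_of_nonneg hβ]
  rcases hβ.eq_or_lt with h0 | hpos
  · have hfloor := add_floor_le_roundedRadius (C.α (t + 1)) (C.β (t + 1))
    rw [C.α_succ, hα, zero_add, C.abs_s] at hfloor
    have : (0 : ℝ) ≤ ⌊|C.β (t + 1)|⌋ := by exact_mod_cast Int.floor_nonneg.2 (abs_nonneg _)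
    have : |C.s (t + 1) * C.d (t + 1)| ≤ 1 := by rw [abs_mul, C.abs_s, one_mul]; exact C.abs_d_le t
    rw [hρt, ← h0, Int.floor_zero, Int.cast_zero, roundedρ, C.α_succ, hα, zero_add]
    linarith [neg_abs_le (C.s (t + 1) * C.d (t + 1))]
  have hs := C.s_of_β_pos t hpos
  have hρ' := C.one_add_ceil_le_roundedρ_succ hpos hα
  rw [hρt, hs]
  rcases hc.1.eq_or_lt with hc1 | hc1
  · -- `c = -1` forces `d = -1`: no loss
    rw [C.d_eq_c t (by rw [← hc1]; norm_num), ← hc1]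
    rw [← hc1, ← sub_eq_add_neg, Int.ceil_sub_one, Int.cast_sub, Int.cast_one] at hρ'
    have : (⌊C.β t⌋ : ℝ) ≤ ⌈C.β t⌉ := by exact_mod_cast Int.floor_le_ceil _
    linarith
  · have : (⌊C.β t⌋ : ℝ) ≤ ⌈C.β t + C.c (t + 1)⌉ := by
      exact_mod_cast Int.le_ceil_iff.2 (by linarith [Int.floor_le (C.β t)])
    linarith

lemma abs_α_succ_sub_sub_le_of_β_nonneg {t : ℕ} (hβ : 0 ≤ C.β t) :
    |C.α (t + 1)| - |C.α t| - C.s (t + 1) * C.d (t + 1) ≤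
      2 * (C.roundedρ (t + 1) - C.roundedρ t) := by
  rcases lt_trichotomy (C.α t) 0 with hα | hα | hα
  · rw [C.abs_α_succ_sub_of_neg hα, C.d_of_α_neg hα]
    linarith [C.roundedρ_le_succ_of_α_neg hβ hα]
  · rw [C.abs_α_succ_sub_of_eq_zero hα]
    exact C.one_sub_s_mul_d_le_of_α_eq_zero hβ hα
  · rw [C.abs_α_succ_sub_of_pos hα, C.d_of_α_pos hα]
    linarith [C.roundedρ_le_succ_of_α_pos hβ hα]

lemma abs_α_succ_sub_sub_le (t : ℕ) :
    |C.α (t + 1)| - |C.α t| - C.s (t + 1) * C.d (t + 1) ≤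
      2 * (C.roundedρ (t + 1) - C.roundedρ t) := by
  rcases le_total 0 (C.β t) with h | h
  · exact C.abs_α_succ_sub_sub_le_of_β_nonneg h
  · simpa using C.neg.abs_α_succ_sub_sub_le_of_β_nonneg (t := t) (by simpa using h)

lemma abs_sum_s_mul_d_le (T : ℕ) : |∑ t ∈ Icc 1 T, C.s t * C.d t| ≤ 2 * C.ρ T + 2 := by
  have hle := sum_Icc_one_le_sub (g := fun t ↦ C.s t * C.d t) (f := fun t ↦ |C.α t|)
    (fun t ↦ C.s_mul_le_abs_α_succ_sub (C.abs_d_le t) (fun h ↦ C.d_of_α_pos h)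
      (fun h ↦ C.d_of_α_neg h)) T
  have hge := sum_Icc_one_le_sub (g := fun t ↦ -(C.s t * C.d t))
    (f := fun t ↦ 2 * C.roundedρ t - |C.α t|) (fun t ↦ by linarith [C.abs_α_succ_sub_sub_le t]) T
  have h0 : C.roundedρ 0 = 0 := by simp [roundedρ, roundedRadius, C.α_zero, C.β_zero]
  have : C.roundedρ T ≤ |C.α T| + |C.β T| + 1 := roundedRadius_le _ _
  simp only [sum_neg_distrib, h0, C.α_zero, abs_zero, sub_zero, mul_zero] at hle hge
  rw [abs_le, ρ]
  constructor <;> linarith [abs_nonneg (C.α T), abs_nonneg (C.β T)]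

lemma ρ_succ_le (t : ℕ) : C.ρ (t + 1) ≤ C.ρ t + 2 := by
  have hα : |C.α (t + 1)| ≤ |C.α t| + 1 := by
    rw [C.α_succ, ← C.abs_s t]; exact abs_add_le _ _
  have hβ : |C.β (t + 1)| ≤ |C.β t| + 1 := by
    rw [C.β_succ]; linarith [abs_add_le (C.β t) (C.c (t + 1)), C.abs_c_le t]
  unfold ρ
  linarith

lemma β_ne_zero_of_not_crossing {t : ℕ} (h : ¬C.Crossing t) : C.β t ≠ 0 := by
  intro h0
  have hβ' : C.β (t + 1) = C.c (t + 1) := by rw [C.β_succ, h0, zero_add]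
  rcases (Ne.lt_or_gt fun hα ↦ h (Or.inl hα)) with hα | hα
  · exact h (Or.inr (Or.inr ⟨h0.ge, by rw [hβ', C.c_of_α_neg t hα]; norm_num⟩))
  · exact h (Or.inr (Or.inl ⟨h0.le, by rw [hβ', C.c_of_α_pos t hα]; norm_num⟩))

lemma ρ_succ_eq_of_not_crossing {t : ℕ} (h : ¬C.Crossing t) : C.ρ (t + 1) = C.ρ t := by
  have hβ0 := C.β_ne_zero_of_not_crossing h
  simp only [Crossing, not_or, not_and, not_lt] at h
  obtain ⟨hα, hup, hdown⟩ := h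
  have hαs : |C.α (t + 1)| - |C.α t| = C.s (t + 1) * C.c (t + 1) := by
    rcases Ne.lt_or_gt hα with h | h
    · rw [C.abs_α_succ_sub_of_neg h, C.c_of_α_neg t h]; ring
    · rw [C.abs_α_succ_sub_of_pos h, C.c_of_α_pos t h]; ring
  have hβs : |C.β (t + 1)| - |C.β t| = -(C.s (t + 1) * C.c (t + 1)) := by
    rcases hβ0.lt_or_gt with h | h
    · rw [C.s_of_β_neg t h, abs_of_neg h, abs_of_nonpos (hup h.le), C.β_succ]; ring
    · rw [C.s_of_β_pos t h, abs_of_pos h, abs_of_nonneg (hdown h.le), C.β_succ]; ring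
  unfold ρ
  linarith

lemma ρ_eq_of_no_crossing {p t : ℕ} (hno : ∀ r, p ≤ r → r < t → ¬C.Crossing r) :
    ∀ r, p ≤ r → r ≤ t → C.ρ r = C.ρ p := by
  intro r hpr
  induction r, hpr using Nat.le_induction with
  | base => exact fun _ ↦ rfl
  | succ r hpr ih =>
    intro hrt
    rw [C.ρ_succ_eq_of_not_crossing (hno r hpr hrt), ih (by omega)]

lemma α_pos_of_no_crossing {p t : ℕ} (hno : ∀ r, p ≤ r → r < t → ¬C.Crossing r)
    (hp : 0 < C.α p) : ∀ r, p ≤ r → r < t → 0 < C.α r := by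
  intro r hpr
  induction r, hpr using Nat.le_induction with
  | base => exact fun _ ↦ hp
  | succ r hpr ih =>
    intro hrt
    have := C.one_le_α (ih (by omega))
    have := C.neg_one_le_s r
    have hne : C.α (r + 1) ≠ 0 := fun h0 ↦ hno (r + 1) (by omega) hrt (Or.inl h0)
    exact lt_of_le_of_ne (by rw [C.α_succ]; linarith) hne.symm

lemma β_pos_of_no_crossing {p t : ℕ} (hno : ∀ r, p ≤ r → r < t → ¬C.Crossing r)
    (hp : 0 < C.β p) : ∀ r, p ≤ r → r < t → 0 < C.β r := by
  intro r hpr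
  induction r, hpr using Nat.le_induction with
  | base => exact fun _ ↦ hp
  | succ r hpr ih =>
    intro hrt
    have hr := ih (by omega)
    have h0 : 0 ≤ C.β (r + 1) :=
      not_lt.1 fun h ↦ hno r hpr (by omega) (Or.inr (Or.inr ⟨hr.le, h⟩))
    exact lt_of_le_of_ne h0 (C.β_ne_zero_of_not_crossing (hno (r + 1) (by omega) hrt)).symm

lemma α_eq_sub_of_β_pos {p t : ℕ} (hβ : ∀ r, p ≤ r → r < t → 0 < C.β r) :
    ∀ r, p ≤ r → r ≤ t → C.α r = C.α p - ((r : ℝ) - p) := by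
  intro r hpr
  induction r, hpr using Nat.le_induction with
  | base => intro _; ring
  | succ r hpr ih =>
    intro hrt
    rw [C.α_succ, C.s_of_β_pos r (hβ r hpr hrt), ih (by omega)]
    push_cast
    ring

lemma β_eq_add_of_α_pos {p t : ℕ} (hα : ∀ r, p ≤ r → r < t → 0 < C.α r) :
    ∀ r, p ≤ r → r ≤ t → C.β r = C.β p + ((r : ℝ) - p) := by
  intro r hpr
  induction r, hpr using Nat.le_induction with
  | base => intro _; ring
  | succ r hpr ih =>
    intro hrt
    rw [C.β_succ, C.c_of_α_pos r (hα r hpr hrt), ih (by omega)]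
    push_cast
    ring

lemma β_eq_sub_of_α_neg {p t : ℕ} (hα : ∀ r, p ≤ r → r < t → C.α r < 0) :
    ∀ r, p ≤ r → r ≤ t → C.β r = C.β p - ((r : ℝ) - p) := by
  intro r hpr
  induction r, hpr using Nat.le_induction with
  | base => intro _; ring
  | succ r hpr ih =>
    intro hrt
    rw [C.β_succ, C.c_of_α_neg r (hα r hpr hrt), ih (by omega)]
    push_cast
    ring

lemma α_le_of_next_crossing {p t : ℕ} (hpt : p ≤ t)
    (hno : ∀ r, p ≤ r → r < t → ¬C.Crossing r) (ht : C.Crossing t)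
    (hα : 0 < C.α p) (hβ : 0 < C.β p) : C.α p ≤ t - p := by
  have hαpos := C.α_pos_of_no_crossing hno hα
  have hβeq := C.β_eq_add_of_α_pos hαpos
  have hp_le : ∀ r, p ≤ r → (p : ℝ) ≤ r := fun r h ↦ by exact_mod_cast h
  have hβpos : ∀ r, p ≤ r → r ≤ t → 0 < C.β r := fun r h1 h2 ↦ by
    rw [hβeq r h1 h2]; linarith [hp_le r h1]
  have hαt := C.α_eq_sub_of_β_pos (fun r h1 h2 ↦ hβpos r h1 h2.le) t hpt le_rfl
  suffices C.α t ≤ 0 by linarith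
  rcases ht with h | ⟨h, _⟩ | ⟨_, h⟩
  · exact h.le
  · linarith [hβpos t hpt le_rfl]
  · refine not_lt.1 fun hpos ↦ ?_
    have := C.β_succ t
    rw [C.c_of_α_pos t hpos] at this
    linarith [hβpos t hpt le_rfl]

lemma β_le_of_next_crossing {p t : ℕ} (hpt : p ≤ t)
    (hno : ∀ r, p ≤ r → r < t → ¬C.Crossing r) (ht : C.Crossing t)
    (hα : C.α p < 0) (hβ : 0 < C.β p) : C.β p ≤ t - p + 1 := by
  have hαeq := C.α_eq_sub_of_β_pos (C.β_pos_of_no_crossing hno hβ)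
  have hαneg : ∀ r, p ≤ r → r ≤ t → C.α r < 0 := fun r h1 h2 ↦ by
    rw [hαeq r h1 h2]; linarith [(by exact_mod_cast h1 : (p : ℝ) ≤ r)]
  have hβt := C.β_eq_sub_of_α_neg (fun r h1 h2 ↦ hαneg r h1 h2.le) t hpt le_rfl
  suffices C.β t ≤ 1 by linarith
  rcases ht with h | ⟨h, _⟩ | ⟨_, h⟩
  · exact absurd h (hαneg t hpt le_rfl).ne
  · linarith
  · have := C.β_succ t
    rw [C.c_of_α_neg t (hαneg t hpt le_rfl)] at this
    linarith

lemma abs_α_succ_le_one_of_crossing_of_β_succ_eq_zero {u : ℕ} (hu : C.Crossing u)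
    (hβ : C.β (u + 1) = 0) : |C.α (u + 1)| ≤ 1 := by
  rcases hu with h | ⟨_, h⟩ | ⟨_, h⟩
  · rw [C.α_succ, h, zero_add, C.abs_s]
  · linarith
  · linarith

lemma neg_one_le_α_succ_of_crossing {u : ℕ} (hu : C.Crossing u) (hβ : 0 < C.β (u + 1)) :
    -1 ≤ C.α (u + 1) := by
  have := C.neg_one_le_s u
  rcases hu with h | ⟨h, _⟩ | ⟨_, h⟩
  · rwa [C.α_succ, h, zero_add]
  · have hαu : 0 ≤ C.α u := not_lt.1 fun ha ↦ by
      rw [C.β_succ, C.c_of_α_neg u ha] at hβ; linarith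
    rw [C.α_succ]
    linarith
  · linarith

lemma β_succ_le_one_of_crossing {u : ℕ} (hu : C.Crossing u) (hα : 0 ≤ C.α (u + 1)) :
    C.β (u + 1) ≤ 1 := by
  have := (abs_le.1 (C.abs_c_le u)).2
  rw [C.β_succ]
  rcases hu with h | ⟨h, _⟩ | ⟨_, h⟩
  · have : C.β u ≤ 0 := not_lt.1 fun hb ↦ by
      rw [C.α_succ, h, C.s_of_β_pos u hb] at hα; linarith
    linarith
  · linarith
  · rw [← C.β_succ]; linarith

lemma ρ_succ_le_of_next_crossing_of_β_nonneg {u t : ℕ} (hu : C.Crossing u)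
    (ht : C.Crossing t) (hut : u < t) (hno : ∀ r, u < r → r < t → ¬C.Crossing r)
    (hβ : 0 ≤ C.β (u + 1)) : C.ρ (u + 1) ≤ t - u + 2 := by
  have hut' : (u : ℝ) + 1 ≤ t := by exact_mod_cast hut
  unfold ρ
  rw [abs_of_nonneg hβ]
  rcases hβ.eq_or_lt with h0 | hpos
  · linarith [C.abs_α_succ_le_one_of_crossing_of_β_succ_eq_zero hu h0.symm]
  rcases lt_or_ge (C.α (u + 1)) 0 with hα | hα
  · have := C.β_le_of_next_crossing hut hno ht hα hpos
    push_cast at this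
    rw [abs_of_neg hα]
    linarith [C.neg_one_le_α_succ_of_crossing hu hpos]
  · have := C.β_succ_le_one_of_crossing hu hα
    rw [abs_of_nonneg hα]
    rcases hα.eq_or_lt with h | h
    · linarith
    · have := C.α_le_of_next_crossing hut hno ht h hpos
      push_cast at this
      linarith

lemma ρ_succ_le_of_next_crossing {u t : ℕ} (hu : C.Crossing u) (ht : C.Crossing t) (hut : u < t)
    (hno : ∀ r, u < r → r < t → ¬C.Crossing r) : C.ρ (u + 1) ≤ t - u + 2 := by
  rcases le_total 0 (C.β (u + 1)) with h | h
  · exact C.ρ_succ_le_of_next_crossing_of_β_nonneg hu ht hut hno h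
  · simpa using C.neg.ρ_succ_le_of_next_crossing_of_β_nonneg (by simpa using hu)
      (by simpa using ht) hut (by simpa using hno) (by simpa using h)

lemma exists_last_crossing {t : ℕ} (ht : 0 < t) :
    ∃ u < t, C.Crossing u ∧ ∀ r, u < r → r < t → ¬C.Crossing r := by
  classical
  refine ⟨Nat.findGreatest C.Crossing (t - 1), ?_,
    Nat.findGreatest_spec (Nat.zero_le _) C.crossing_zero,
    fun r h1 h2 ↦ Nat.findGreatest_is_greatest h1 (by omega)⟩
  have := Nat.findGreatest_le (P := C.Crossing) (t - 1)
  omega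

lemma sq_ρ_le (t : ℕ) : C.ρ t ^ 2 ≤ 16 * t := by
  induction t using Nat.strong_induction_on with
  | _ t ih =>
  rcases t with _ | t
  · simp [ρ, C.α_zero, C.β_zero]
  by_cases ht : C.Crossing t
  · rcases Nat.eq_zero_or_pos t with rfl | htpos
    · have := C.ρ_succ_le 0
      have := C.ρ_nonneg 1
      have : C.ρ 0 = 0 := by simp [ρ, C.α_zero, C.β_zero]
      push_cast
      nlinarith
    -- `ρ` is constant since the last crossing `u`, and was at most `t - u + 2` right after it
    obtain ⟨u, hut, hu, hno⟩ := C.exists_last_crossing htpos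
    have hgap := C.ρ_succ_le_of_next_crossing hu ht hut hno
    have hconst := C.ρ_eq_of_no_crossing (p := u + 1) hno t hut le_rfl
    have hstep : C.ρ (t + 1) ^ 2 ≤ (C.ρ (u + 1) + 2) ^ 2 :=
      pow_le_pow_left₀ (C.ρ_nonneg _) (hconst ▸ C.ρ_succ_le t) 2
    have hih := ih (u + 1) (by omega)
    have : (u : ℝ) + 1 ≤ t := by exact_mod_cast hut
    push_cast at hih ⊢
    nlinarith
  · rw [C.ρ_succ_eq_of_not_crossing ht]
    have := ih t (by omega)
    push_cast
    linarith

lemma ρ_le_four_mul_sqrt (t : ℕ) : C.ρ t ≤ 4 * √t := by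
  have h := Real.abs_le_sqrt (C.sq_ρ_le t)
  rwa [abs_of_nonneg (C.ρ_nonneg t), Real.sqrt_mul (by norm_num),
    show (16 : ℝ) = 4 ^ 2 by norm_num, Real.sqrt_sq (by norm_num)] at h

end FPTrajectory

lemma cumul_zero (v : ℝ → ℝ) : cumul v 0 = 0 := intervalIntegral.integral_same

namespace IsDensity

variable {lo hi : ℝ} {v : ℝ → ℝ}

lemma cumul_one (hv : IsDensity lo hi v) : cumul v 1 = 1 := hv.2.2

lemma intervalIntegrable_of_mem (hv : IsDensity lo hi v) {x y : ℝ} (hx : x ∈ Set.Icc (0 : ℝ) 1)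
    (hy : y ∈ Set.Icc (0 : ℝ) 1) : IntervalIntegrable v volume x y :=
  hv.1.mono_set (by rw [Set.uIcc_of_le zero_le_one]; exact Set.uIcc_subset_Icc hx hy)

lemma mul_sub_le_cumul_sub (hv : IsDensity lo hi v) {x y : ℝ} (hx : 0 ≤ x) (hxy : x ≤ y)
    (hy : y ≤ 1) : lo * (y - x) ≤ cumul v y - cumul v x := by
  have hx' : x ∈ Set.Icc (0 : ℝ) 1 := ⟨hx, hxy.trans hy⟩
  have hy' : y ∈ Set.Icc (0 : ℝ) 1 := ⟨hx.trans hxy, hy⟩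
  have h0 : (0 : ℝ) ∈ Set.Icc (0 : ℝ) 1 := ⟨le_rfl, zero_le_one⟩
  rw [cumul, cumul, intervalIntegral.integral_interval_sub_left
    (hv.intervalIntegrable_of_mem h0 hy') (hv.intervalIntegrable_of_mem h0 hx')]
  have := intervalIntegral.integral_mono_on hxy intervalIntegrable_const
    (hv.intervalIntegrable_of_mem hx' hy') fun z hz ↦ (hv.2.1 z ⟨hx.trans hz.1, hz.2.trans hy⟩).1
  simpa [mul_comm] using this

lemma abs_two_mul_cumul_sub_one_le (hlo : 0 ≤ lo) (hv : IsDensity lo hi v) {x : ℝ}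
    (hx : x ∈ Set.Icc (0 : ℝ) 1) : |2 * cumul v x - 1| ≤ 1 := by
  have h0 := hv.mul_sub_le_cumul_sub le_rfl hx.1 hx.2
  have h1 := hv.mul_sub_le_cumul_sub hx.1 hx.2 le_rfl
  rw [cumul_zero] at h0
  rw [hv.cumul_one] at h1
  rw [abs_le]
  constructor <;> nlinarith [hx.1, hx.2]

lemma eq_zero_or_eq_one (hlo : 0 < lo) (hv : IsDensity lo hi v) {x : ℝ}
    (hx : x ∈ Set.Icc (0 : ℝ) 1) (h : |2 * cumul v x - 1| = 1) : x = 0 ∨ x = 1 := by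
  have h0 := hv.mul_sub_le_cumul_sub le_rfl hx.1 hx.2
  have h1 := hv.mul_sub_le_cumul_sub hx.1 hx.2 le_rfl
  rw [cumul_zero] at h0
  rw [hv.cumul_one] at h1
  rcases abs_eq (zero_le_one' ℝ) |>.1 h with h | h
  · right; nlinarith [hx.2]
  · left; nlinarith [hx.1]

end IsDensity

def Choice.sign : Choice → ℝ
  | .L => -1
  | .R => 1

lemma Choice.sign_eq (x : Choice) : x.sign = if x = .R then 1 else -1 := by
  cases x <;> rfl

lemma uA_eq (vA : ℝ → ℝ) (a : ℕ → ℝ) (b : ℕ → Choice) (t : ℕ) :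
    uA vA a b t = (1 + (b t).sign * (2 * cumul vA (a t) - 1)) / 2 := by
  cases h : b t
  · simp [uA, h, Choice.sign]; ring
  · simp [uA, h, Choice.sign]

lemma uB_eq (vB : ℝ → ℝ) (a : ℕ → ℝ) (b : ℕ → Choice) (t : ℕ) :
    uB vB a b t = (1 + -((b t).sign * (2 * cumul vB (a t) - 1))) / 2 := by
  cases h : b t
  · simp [uB, h, Choice.sign]
  · simp [uB, h, Choice.sign]; ring

namespace FPTrajectory

noncomputable def ofFictitiousPlay {δ Δ : ℝ} (hδ : 0 < δ) {vA vB : ℝ → ℝ}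
    (hA : IsDensity δ Δ vA) (hB : IsDensity δ Δ vB) {a : ℕ → ℝ} {b : ℕ → Choice}
    (ha : ∀ t : ℕ, 1 ≤ t → a t ∈ Set.Icc (0 : ℝ) 1) (hfp : IsFictitiousPlay vB a b) :
    FPTrajectory where
  α := alphaFP b
  β := betaFP vB a
  s t := (b t).sign
  c t := 2 * cumul vB (a t) - 1
  d t := 2 * cumul vA (a t) - 1
  α_zero := by simp [alphaFP]
  β_zero := by simp [betaFP]
  α_succ t := by rw [alphaFP, alphaFP, sum_Icc_succ_top (by omega), Choice.sign_eq]
  β_succ t := by rw [betaFP, betaFP, sum_Icc_succ_top (by omega)]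
  s_eq t := by cases b (t + 1) <;> simp [Choice.sign]
  abs_c_le t := hB.abs_two_mul_cumul_sub_one_le hδ.le (ha _ (by omega))
  abs_d_le t := hA.abs_two_mul_cumul_sub_one_le hδ.le (ha _ (by omega))
  c_of_α_pos t h := by rw [(hfp t).1 h, hB.cumul_one]; norm_num
  c_of_α_neg t h := by rw [(hfp t).2.1 h, cumul_zero]; norm_num
  s_of_β_pos t h := by rw [(hfp t).2.2.1 h]; rfl
  s_of_β_neg t h := by rw [(hfp t).2.2.2 h]; rfl
  d_eq_c t h := by
    rcases hB.eq_zero_or_eq_one hδ (ha _ (by omega)) h with h | h <;>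
      simp [h, cumul_zero, hA.cumul_one, hB.cumul_one]

end FPTrajectory

lemma abs_sum_half_add_div_sub_half_le {T : ℕ} (hT : 0 < T) (x : ℕ → ℝ) {K : ℝ}
    (hx : |∑ t ∈ Icc 1 T, x t| ≤ 2 * K * √T) :
    |(∑ t ∈ Icc 1 T, (1 + x t) / 2) / T - 1 / 2| ≤ K / √T := by
  have hT' : (0 : ℝ) < T := by exact_mod_cast hT
  have hsqrt : 0 < √(T : ℝ) := Real.sqrt_pos.2 hT'
  have key : (∑ t ∈ Icc 1 T, (1 + x t) / 2) / T - 1 / 2 = (∑ t ∈ Icc 1 T, x t) / (2 * T) := by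
    rw [← sum_div, sum_add_distrib, sum_const, Nat.card_Icc, add_tsub_cancel_right, nsmul_one]
    field_simp
    ring
  rw [key, abs_div, abs_of_pos (by positivity : (0 : ℝ) < 2 * T),
    div_le_div_iff₀ (by positivity) hsqrt]
  calc |∑ t ∈ Icc 1 T, x t| * √T ≤ 2 * K * √T * √T := by gcongr
    _ = K * (2 * T) := by rw [mul_assoc, Real.mul_self_sqrt hT'.le]; ring

theorem fictitious_play_converges_general
    (δ Δ : ℝ) (hδ : 0 < δ)
    (vA vB : ℝ → ℝ) (hA : IsDensity δ Δ vA) (hB : IsDensity δ Δ vB)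
    (a : ℕ → ℝ) (b : ℕ → Choice)
    (ha : ∀ t : ℕ, 1 ≤ t → a t ∈ Set.Icc (0:ℝ) 1)
    (hfp : IsFictitiousPlay vB a b)
    (T : ℕ) (hT : 5 ≤ T) :
    |(∑ t ∈ Finset.Icc 1 T, uA vA a b t) / T - 1/2| ≤ 2 * Real.sqrt 10 / Real.sqrt T ∧
    |(∑ t ∈ Finset.Icc 1 T, uB vB a b t) / T - 1/2| ≤ Real.sqrt 10 / Real.sqrt T := by
  let C := FPTrajectory.ofFictitiousPlay hδ hA hB ha hfp
  have hT0 : 0 < T := by omega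
  have hρ : C.ρ T ≤ 4 * √T := C.ρ_le_four_mul_sqrt T
  have hsqrtT : 1 ≤ √(T : ℝ) := Real.one_le_sqrt.2 (by exact_mod_cast hT0)
  have hsqrt10 : 5 / 2 ≤ √(10 : ℝ) := Real.le_sqrt_of_sq_le (by norm_num)
  simp only [uA_eq, uB_eq]
  constructor
  · refine (abs_sum_half_add_div_sub_half_le hT0 _ (K := 5) ?_).trans ?_
    · exact (C.abs_sum_s_mul_d_le T).trans (by linarith)
    · gcongr
      linarith
  · refine (abs_sum_half_add_div_sub_half_le hT0 _ (K := 2) ?_).trans ?_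
    · rw [sum_neg_distrib, abs_neg]
      exact (C.abs_sum_s_mul_c_le T).trans (by linarith)
    · gcongr
      linarith

/-- Under fictitious play, for every `T ≥ 5` both players' average payoffs
are within `O(1/√T)` of `1/2`. -/
theorem fictitious_play_converges
    (δ Δ : ℝ) (hδ : 0 < δ) (hδΔ : δ ≤ Δ)
    (vA vB : ℝ → ℝ) (hA : IsDensity δ Δ vA) (hB : IsDensity δ Δ vB)
    (a : ℕ → ℝ) (b : ℕ → Choice)
    (ha : ∀ t : ℕ, 1 ≤ t → a t ∈ Set.Icc (0:ℝ) 1)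
    (hfp : IsFictitiousPlay vB a b)
    (T : ℕ) (hT : 5 ≤ T) :
    |(∑ t ∈ Finset.Icc 1 T, uA vA a b t) / T - 1/2| ≤ 2 * Real.sqrt 10 / Real.sqrt T ∧
    |(∑ t ∈ Finset.Icc 1 T, uB vB a b t) / T - 1/2| ≤ Real.sqrt 10 / Real.sqrt T :=
  fictitious_play_converges_general δ Δ hδ vA vB hA hB a b ha hfp T hT
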